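/- arXiv:0812.2097 — 7 statements merged into one kernel-verified Lean document; each statement's English description precedes it below -/
import Mathlib

section
/- Let E be a bounded nonempty open subset of ℝ^d with center of gravity x̄_E and x_E ∈ ℝ^d. Then there exists an affine function w_E : ℝ^d → ℝ such that ∫_E w_E(x) dx = |E| and ∫_E x w_E(x) dx = |E| x_E. -/
/-!
The moments `p ↦ (∫_E w_p, ∫_E x w_p(x) dx)` of the affine function `w_p(x) = a + ⟪ξ, x⟫`,
`p = (a, ξ)`, form a linear endomorphism of the finite-dimensional space `ℝ × ℝ^d`. If both
moments vanish then `∫_E w_p² = a ∫_E w_p + ⟪ξ, ∫_E x w_p(x) dx⟫ = 0`, so the continuous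
function `w_p` vanishes on the nonempty open set `E`, which forces `p = 0`. Hence the moment
map is injective, therefore surjective, and every prescribed pair of moments is attained.
-/

open MeasureTheory Filter Topology Set
open scoped RealInnerProductSpace

lemma memLp_id_restrict_of_isBounded {X : Type*} [NormedAddCommGroup X] [MeasurableSpace X]
    [BorelSpace X] [ProperSpace X] {μ : Measure X} [IsFiniteMeasureOnCompacts μ] {E : Set X}
    (hb : Bornology.IsBounded E) (q : ENNReal) : MemLp id q (μ.restrict E) := by
  have : IsFiniteMeasure (μ.restrict (closure E)) :=
    isFiniteMeasure_restrict.2 hb.isCompact_closure.measure_lt_top.ne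
  obtain ⟨C, hC⟩ := hb.closure.exists_norm_le
  refine MemLp.mono_measure (Measure.restrict_mono subset_closure le_rfl) ?_
  exact MemLp.of_bound continuous_id.aestronglyMeasurable C
    ((ae_restrict_mem isClosed_closure.measurableSet).mono hC)

variable {V : Type*} [NormedAddCommGroup V] [InnerProductSpace ℝ V]

def affineFn (p : ℝ × V) (x : V) : ℝ := p.1 + ⟪p.2, x⟫

lemma continuous_affineFn (p : ℝ × V) : Continuous (affineFn p) :=
  continuous_const.add (continuous_const.inner continuous_id)

lemma affineFn_add (p q : ℝ × V) (x : V) : affineFn (p + q) x = affineFn p x + affineFn q x := by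
  simp only [affineFn, Prod.fst_add, Prod.snd_add, inner_add_left]
  ring

lemma affineFn_smul (c : ℝ) (p : ℝ × V) (x : V) : affineFn (c • p) x = c * affineFn p x := by
  simp only [affineFn, Prod.smul_fst, Prod.smul_snd, real_inner_smul_left, smul_eq_mul]
  ring

lemma eq_zero_of_eqOn_affineFn_zero {U : Set V} (hU : IsOpen U) (hne : U.Nonempty) {p : ℝ × V}
    (h : EqOn (affineFn p) 0 U) : p = 0 := by
  obtain ⟨x₀, hx₀⟩ := hne
  have hline : ∀ᶠ t : ℝ in 𝓝[>] 0, x₀ + t • p.2 ∈ U := by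
    have : Tendsto (fun t : ℝ => x₀ + t • p.2) (𝓝 0) (𝓝 x₀) := by
      simpa using ((tendsto_id (x := 𝓝 (0 : ℝ))).smul_const p.2).const_add x₀
    exact (this.mono_left nhdsWithin_le_nhds).eventually (hU.mem_nhds hx₀)
  obtain ⟨t, htU, ht⟩ := (hline.and self_mem_nhdsWithin).exists
  have hξ : p.2 = 0 := by
    have hdiff : affineFn p (x₀ + t • p.2) - affineFn p x₀ = t * ‖p.2‖ ^ 2 := by
      simp only [affineFn, inner_add_right, real_inner_smul_right, real_inner_self_eq_norm_sq]
      ring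
    have h₁ : affineFn p (x₀ + t • p.2) = 0 := h htU
    have h₀ : affineFn p x₀ = 0 := h hx₀
    rw [h₁, h₀, sub_zero, eq_comm, mul_eq_zero] at hdiff
    simpa [ht.ne'] using hdiff
  have ha : p.1 = 0 := by simpa [affineFn, hξ] using h hx₀
  exact Prod.ext ha hξ

lemma eq_zero_of_affineFn_ae_restrict_eq_zero [MeasurableSpace V] {μ : Measure V}
    [μ.IsOpenPosMeasure] {U : Set V} (hU : IsOpen U) (hne : U.Nonempty) {p : ℝ × V}
    (h : affineFn p =ᵐ[μ.restrict U] 0) : p = 0 :=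
  eq_zero_of_eqOn_affineFn_zero hU hne <| Measure.eqOn_open_of_ae_eq h hU
    (continuous_affineFn p).continuousOn continuousOn_const

section Moments

variable [MeasurableSpace V] {μ : Measure V} [IsFiniteMeasure μ]

lemma memLp_affineFn (hμ : MemLp id 2 μ) (p : ℝ × V) : MemLp (affineFn p) 2 μ :=
  (memLp_const p.1).add (hμ.const_inner p.2)

lemma integrable_affineFn_smul (hμ : MemLp id 2 μ) (p : ℝ × V) :
    Integrable (fun x => affineFn p x • x) μ :=
  memLp_one_iff_integrable.mp (hμ.smul (memLp_affineFn hμ p))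

noncomputable def affineMoments (hμ : MemLp id 2 μ) : ℝ × V →ₗ[ℝ] ℝ × V where
  toFun p := (∫ x, affineFn p x ∂μ, ∫ x, affineFn p x • x ∂μ)
  map_add' p q := by
    have hint := fun p => (memLp_affineFn hμ p).integrable one_le_two
    simp only [affineFn_add, add_smul, Prod.mk_add_mk]
    rw [integral_add (hint p) (hint q),
      integral_add (integrable_affineFn_smul hμ p) (integrable_affineFn_smul hμ q)]
  map_smul' c p := by
    simp only [affineFn_smul, mul_smul, integral_const_mul, integral_smul, RingHom.id_apply,
      Prod.smul_mk, smul_eq_mul]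

variable [CompleteSpace V]

lemma integral_affineFn_sq (hμ : MemLp id 2 μ) (p : ℝ × V) :
    ∫ x, affineFn p x ^ 2 ∂μ = p.1 * (affineMoments hμ p).1 + ⟪p.2, (affineMoments hμ p).2⟫ := by
  have hint := (memLp_affineFn hμ p).integrable one_le_two
  have hsq : ∀ x, affineFn p x ^ 2 = p.1 * affineFn p x + ⟪p.2, affineFn p x • x⟫ := by
    intro x
    simp only [real_inner_smul_right, affineFn]
    ring
  simp only [hsq]
  rw [integral_add (hint.const_mul _) ((integrable_affineFn_smul hμ p).const_inner _),
    integral_const_mul, integral_inner (integrable_affineFn_smul hμ p)]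
  rfl

lemma affineFn_ae_eq_zero_of_affineMoments_eq_zero (hμ : MemLp id 2 μ) {p : ℝ × V}
    (hp : affineMoments hμ p = 0) : affineFn p =ᵐ[μ] 0 := by
  have hsq : ∫ x, affineFn p x ^ 2 ∂μ = 0 := by
    rw [integral_affineFn_sq hμ, hp, Prod.fst_zero, Prod.snd_zero, inner_zero_right, mul_zero,
      add_zero]
  filter_upwards [(integral_eq_zero_iff_of_nonneg (fun x => sq_nonneg _)
    (memLp_affineFn hμ p).integrable_sq).mp hsq] with x hx
  exact pow_eq_zero_iff two_ne_zero |>.mp hx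

lemma affineMoments_surjective [FiniteDimensional ℝ V] (hμ : MemLp id 2 μ)
    (hμ_pos : ∀ p : ℝ × V, affineFn p =ᵐ[μ] 0 → p = 0) :
    Function.Surjective (affineMoments hμ) := by
  refine LinearMap.injective_iff_surjective.mp ?_
  rw [← LinearMap.ker_eq_bot, LinearMap.ker_eq_bot']
  exact fun p hp => hμ_pos p (affineFn_ae_eq_zero_of_affineMoments_eq_zero hμ hp)

end Moments

/-- Existence of an affine weight function `w_E(x) = a + ξ·x` on a bounded nonempty
open set `E ⊂ ℝ^d` with `∫_E w_E = |E|` and `∫_E x w_E(x) dx = |E| x_E`. -/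
theorem stmt1 (d : ℕ) (E : Set (EuclideanSpace ℝ (Fin d)))
    (hE : IsOpen E) (hne : E.Nonempty) (hb : Bornology.IsBounded E)
    (xE : EuclideanSpace ℝ (Fin d)) :
    ∃ (a : ℝ) (ξ : EuclideanSpace ℝ (Fin d)),
      (∫ x in E, (a + (inner ℝ ξ x : ℝ))) = (volume E).toReal ∧
      (∫ x in E, (a + (inner ℝ ξ x : ℝ)) • x) = (volume E).toReal • xE := by
  have : IsFiniteMeasure (volume.restrict E) := isFiniteMeasure_restrict.2 hb.measure_lt_top.ne
  have hμ := memLp_id_restrict_of_isBounded (μ := volume) hb 2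
  obtain ⟨p, hp⟩ := affineMoments_surjective hμ
    (fun _ => eq_zero_of_affineFn_ae_restrict_eq_zero hE hne)
    ((volume E).toReal, (volume E).toReal • xE)
  exact ⟨p.1, p.2, congrArg Prod.fst hp, congrArg Prod.snd hp⟩
end

section
/- Let Λ_K be a symmetric positive definite d×d matrix, K a polytope with k faces, and define v_K : ℝ^k → ℝ^d by |K| Λ_K v_K(F) = −Σ_{σ} |σ| F_σ (x̄_σ − x_K) and T_{K,σ}(F) = F_σ + Λ_K v_K(F) · n_{K,σ}. Let N be the k×d matrix with rows ((Λ_K)_j · n_{K,σ})_σ in column j (i.e. N has rows (Λ_K n_{K,σ})^T). Then the kernel of the linear map T_K : ℝ^k → ℝ^k equals the image of N, and T_K has rank k − d. -/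
/-!
Since `Λ` is symmetric, `(N e)_σ = Λ e · n_σ`, so `T_K = id + N ∘ v_K`. The geometric identity
applied to `Λ e` turns the defining equation of `v_K (N e)` into `|K| Λ v_K (N e) = -|K| Λ e`,
i.e. `v_K ∘ N = -id`. For any such pair, `ker (id + N ∘ v) = range N` and `N` is injective, so
rank–nullity gives rank `k - d`.
-/

open Matrix

section IdAddComp

variable {R M V : Type*} [Ring R] [AddCommGroup M] [Module R M] [AddCommGroup V] [Module R V]

theorem LinearMap.ker_id_add_comp_eq_range {N : M →ₗ[R] V} {v : V →ₗ[R] M}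
    (hvN : v ∘ₗ N = -LinearMap.id) :
    LinearMap.ker (LinearMap.id + N ∘ₗ v) = LinearMap.range N := by
  ext F
  constructor
  · intro hF
    refine ⟨-v F, ?_⟩
    rw [LinearMap.mem_ker, LinearMap.add_apply, LinearMap.id_apply, LinearMap.comp_apply] at hF
    rw [map_neg, neg_eq_iff_add_eq_zero, add_comm, hF]
  · rintro ⟨e, rfl⟩
    have hvNe : v (N e) = -e := LinearMap.congr_fun hvN e
    simp [hvNe]

theorem LinearMap.injective_of_comp_eq_neg_id {N : M →ₗ[R] V} {v : V →ₗ[R] M}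
    (hvN : v ∘ₗ N = -LinearMap.id) : Function.Injective N :=
  Function.LeftInverse.injective (g := -v) fun e => by
    rw [LinearMap.neg_apply, ← LinearMap.comp_apply, hvN]
    simp

end IdAddComp

theorem LinearMap.finrank_range_id_add_comp {K M V : Type*} [DivisionRing K]
    [AddCommGroup M] [Module K M] [AddCommGroup V] [Module K V] [FiniteDimensional K V]
    {N : M →ₗ[K] V} {v : V →ₗ[K] M} (hvN : v ∘ₗ N = -LinearMap.id) :
    Module.finrank K (LinearMap.range (LinearMap.id + N ∘ₗ v)) =
      Module.finrank K V - Module.finrank K M := by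
  have hrank := LinearMap.finrank_range_add_finrank_ker (LinearMap.id + N ∘ₗ v)
  rw [LinearMap.ker_id_add_comp_eq_range hvN,
    LinearMap.finrank_range_of_inj (LinearMap.injective_of_comp_eq_neg_id hvN)] at hrank
  omega

theorem Matrix.IsSymm.mulVec_dotProduct_comm {ι α : Type*} [Fintype ι] [CommSemiring α]
    {A : Matrix ι ι α} (hA : A.IsSymm) (a b : ι → α) : (A *ᵥ a) ⬝ᵥ b = (A *ᵥ b) ⬝ᵥ a := by
  rw [dotProduct_comm _ b, dotProduct_mulVec, ← mulVec_transpose, hA.eq]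

theorem stmt8_general (d k : ℕ) (area : Fin k → ℝ)
    (n xbar : Fin k → (Fin d → ℝ)) (xK : Fin d → ℝ) (volK : ℝ) (hvol : 0 < volK)
    (Λ : Matrix (Fin d) (Fin d) ℝ) (hΛ : Λ.PosDef)
    (hmagic : ∀ e : Fin d → ℝ,
      volK • e = ∑ σ, (area σ * (e ⬝ᵥ n σ)) • (xbar σ - xK))
    (vK : (Fin k → ℝ) →ₗ[ℝ] (Fin d → ℝ))
    (hv : ∀ F, volK • (Λ *ᵥ vK F) = -∑ σ, (area σ * F σ) • (xbar σ - xK))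
    (TK : (Fin k → ℝ) →ₗ[ℝ] (Fin k → ℝ))
    (hT : ∀ F σ, TK F σ = F σ + (Λ *ᵥ vK F) ⬝ᵥ n σ)
    (N : Matrix (Fin k) (Fin d) ℝ) (hN : ∀ σ j, N σ j = (Λ *ᵥ n σ) j) :
    LinearMap.ker TK = LinearMap.range N.mulVecLin ∧
      Module.finrank ℝ (LinearMap.range TK) = k - d := by
  have hNe : ∀ e σ, (N *ᵥ e) σ = (Λ *ᵥ e) ⬝ᵥ n σ := fun e σ => by
    rw [(isHermitian_iff_isSymm.mp hΛ.1).mulVec_dotProduct_comm, ← funext (hN σ)]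
    rfl
  have hTK : TK = LinearMap.id + N.mulVecLin ∘ₗ vK := by
    ext F σ
    simp [hT, hNe]
  have hvN : vK ∘ₗ N.mulVecLin = -LinearMap.id := by
    refine LinearMap.ext fun e => ?_
    refine (mulVec_injective_iff_isUnit.mpr hΛ.isUnit) (smul_right_injective _ hvol.ne' ?_)
    simp only [LinearMap.comp_apply, mulVecLin_apply, LinearMap.neg_apply, LinearMap.id_apply]
    rw [hv, mulVec_neg, smul_neg, hmagic]
    simp only [hNe]
  rw [hTK]
  refine ⟨LinearMap.ker_id_add_comp_eq_range hvN, ?_⟩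
  simpa using LinearMap.finrank_range_id_add_comp hvN

/-- Lemma 3.2 of the paper: with `v_K` defined by `|K| Λ v_K(F) = -Σ_σ |σ| F_σ (x̄_σ - x_K)`
and `T_{K,σ}(F) = F_σ + Λ v_K(F)·n_σ`, the kernel of `T_K` equals the image of the
matrix `N` with rows `(Λ n_σ)^T`, and `T_K` has rank `k - d`. -/
theorem stmt8 (d k : ℕ) (area : Fin k → ℝ) (harea : ∀ σ, 0 < area σ)
    (n xbar : Fin k → (Fin d → ℝ)) (xK : Fin d → ℝ) (volK : ℝ) (hvol : 0 < volK)
    (Λ : Matrix (Fin d) (Fin d) ℝ) (hΛ : Λ.PosDef)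
    (hspan : Submodule.span ℝ (Set.range fun σ => xbar σ - xK) = ⊤)
    (hmagic : ∀ e : Fin d → ℝ,
      volK • e = ∑ σ, (area σ * (e ⬝ᵥ n σ)) • (xbar σ - xK))
    (vK : (Fin k → ℝ) →ₗ[ℝ] (Fin d → ℝ))
    (hv : ∀ F, volK • (Λ *ᵥ vK F) = -∑ σ, (area σ * F σ) • (xbar σ - xK))
    (TK : (Fin k → ℝ) →ₗ[ℝ] (Fin k → ℝ))
    (hT : ∀ F σ, TK F σ = F σ + (Λ *ᵥ vK F) ⬝ᵥ n σ)
    (N : Matrix (Fin k) (Fin d) ℝ) (hN : ∀ σ j, N σ j = (Λ *ᵥ n σ) j) :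
    LinearMap.ker TK = LinearMap.range N.mulVecLin ∧
      Module.finrank ℝ (LinearMap.range TK) = k - d :=
  stmt8_general d k area n xbar xK volK hvol Λ hΛ hmagic vK hv TK hT N hN
end

section
/- With the notation T_{K,σ}(F) = F_σ + Λ_K v_K(F)·n_{K,σ} where |K|Λ_K v_K(F) = −Σ_σ |σ| F_σ (x̄_σ − x_K), the map T_K is idempotent: T_K(T_K(F)) = T_K(F) for all F ∈ ℝ^k. -/
open Matrix BigOperators

/-- The map `T_K`, with `T_{K,σ}(F) = F_σ + Λ v_K(F)·n_σ` and
`|K| Λ v_K(F) = -Σ_σ |σ| F_σ (x̄_σ - x_K)`, is idempotent, assuming the identity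
`|K| e = Σ_σ |σ| (e·n_σ)(x̄_σ - x_K)` for all `e`. -/
theorem stmt9 (d k : ℕ) (area : Fin k → ℝ) (harea : ∀ σ, 0 < area σ)
    (n xbar : Fin k → (Fin d → ℝ)) (xK : Fin d → ℝ) (volK : ℝ) (hvol : 0 < volK)
    (Λ : Matrix (Fin d) (Fin d) ℝ) (hΛ : Λ.PosDef)
    (hmagic : ∀ e : Fin d → ℝ,
      volK • e = ∑ σ, (area σ * (e ⬝ᵥ n σ)) • (xbar σ - xK))
    (vK : (Fin k → ℝ) →ₗ[ℝ] (Fin d → ℝ))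
    (hv : ∀ F, volK • (Λ *ᵥ vK F) = -∑ σ, (area σ * F σ) • (xbar σ - xK))
    (TK : (Fin k → ℝ) →ₗ[ℝ] (Fin k → ℝ))
    (hT : ∀ F σ, TK F σ = F σ + (Λ *ᵥ vK F) ⬝ᵥ n σ) :
    ∀ F, TK (TK F) = TK F := by
  intro F
  have key : volK • (Λ *ᵥ vK (TK F)) = 0 := by
    rw [hv (TK F)]
    have : ∑ σ, (area σ * TK F σ) • (xbar σ - xK)
        = ∑ σ, (area σ * F σ) • (xbar σ - xK)
          + ∑ σ, (area σ * ((Λ *ᵥ vK F) ⬝ᵥ n σ)) • (xbar σ - xK) := by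
      rw [← Finset.sum_add_distrib]
      refine Finset.sum_congr rfl fun σ _ => ?_
      rw [hT F σ, mul_add, add_smul]
    rw [this, ← hmagic (Λ *ᵥ vK F), hv F]
    abel
  have h0 : Λ *ᵥ vK (TK F) = 0 := by
    have := smul_eq_zero.mp key
    rcases this with h | h
    · exact absurd h (ne_of_gt hvol)
    · exact h
  funext σ
  rw [hT (TK F) σ, h0, hT F σ]
  simp
end

section
/- Define D_K : ℝ^k → ℝ^d by D_K V = (1/|K|) Σ_σ V_σ n_{K,σ} and L_K : ℝ^k → ℝ^k by (L_K V)_σ = V_σ/|σ| − D_K V · (x̄_σ − x_K). Let R be the k×d matrix with rows (|σ|(x̄_σ − x_K)^T)_σ. Then ker(L_K) = Im(R), and dim ker(L_K) = d. -/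
/-!
The identity `|K| e = ∑_σ |σ| (e · n_σ) (x̄_σ - x_K)` says that the matrix
`∑_σ |σ| (x̄_σ - x_K) n_σᵀ` is `|K| • 1`; so is its transpose, which means exactly that
`D_K (R e) = e`. Since `L_K V = 0` says `V = R (D_K V)` componentwise, the kernel of `L_K`
is the range of `R`, and `R` is injective, having `D_K` as a left inverse.
-/

open Matrix

theorem sum_dotProduct_smul_symm {ι m R : Type*} [Fintype ι] [Fintype m] [DecidableEq m]
    [CommRing R] (w : ι → R) (a b : ι → m → R) (c : R)
    (h : ∀ e, c • e = ∑ i, (w i * (e ⬝ᵥ a i)) • b i) (e : m → R) :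
    c • e = ∑ i, (w i * (e ⬝ᵥ b i)) • a i := by
  set M : Matrix m m R := ∑ i, w i • vecMulVec (b i) (a i)
  have hM : M = c • 1 := ext_iff_mulVec.2 fun v => by
    simp [M, sum_mulVec, smul_mulVec, vecMulVec_mulVec, h v, dotProduct_comm, smul_smul]
  have := congrArg (e ᵥ* ·) hM
  simpa [M, vecMul_sum, vecMul_smul, vecMul_vecMulVec, smul_smul] using this.symm

theorem LinearMap.ker_eq_range_of_leftInverse {K M N P : Type*} [Semiring K]
    [AddCommMonoid M] [AddCommMonoid N] [AddCommMonoid P] [Module K M] [Module K N] [Module K P]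
    {L : M →ₗ[K] P} {R : N →ₗ[K] M} {D : M → N} (hDR : Function.LeftInverse D R)
    (hL : ∀ V, L V = 0 ↔ V = R (D V)) :
    ker L = range R := by
  ext V
  refine ⟨fun hV => ⟨D V, ((hL V).1 hV).symm⟩, ?_⟩
  rintro ⟨e, rfl⟩
  exact (hL _).2 (by rw [hDR e])

theorem stmt10_general (d k : ℕ) (area : Fin k → ℝ) (harea : ∀ σ, 0 < area σ)
    (n xbar : Fin k → (Fin d → ℝ)) (xK : Fin d → ℝ) (volK : ℝ) (hvol : 0 < volK)
    (hmagic : ∀ e : Fin d → ℝ,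
      volK • e = ∑ σ, (area σ * (e ⬝ᵥ n σ)) • (xbar σ - xK))
    (DK : (Fin k → ℝ) →ₗ[ℝ] (Fin d → ℝ))
    (hD : ∀ V, DK V = volK⁻¹ • ∑ σ, V σ • n σ)
    (LK : (Fin k → ℝ) →ₗ[ℝ] (Fin k → ℝ))
    (hL : ∀ V σ, LK V σ = V σ / area σ - DK V ⬝ᵥ (xbar σ - xK))
    (R : Matrix (Fin k) (Fin d) ℝ)
    (hR : ∀ σ j, R σ j = area σ * (xbar σ j - xK j)) :
    LinearMap.ker LK = LinearMap.range R.mulVecLin ∧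
      Module.finrank ℝ (LinearMap.ker LK) = d := by
  have hRe : ∀ e σ, (R *ᵥ e) σ = area σ * (e ⬝ᵥ (xbar σ - xK)) := fun e σ => by
    simp only [mulVec, dotProduct, hR, Pi.sub_apply, Finset.mul_sum]
    exact Finset.sum_congr rfl fun j _ => by ring
  have hDR : Function.LeftInverse DK R.mulVecLin := fun e => by
    rw [mulVecLin_apply, hD, funext (hRe e),
      ← sum_dotProduct_smul_symm area n (fun σ => xbar σ - xK) volK hmagic e,
      inv_smul_smul₀ hvol.ne']
  have hLK : ∀ V, LK V = 0 ↔ V = R.mulVecLin (DK V) := fun V => by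
    simp only [funext_iff, hL, mulVecLin_apply, hRe, dotProduct_comm (DK V), Pi.zero_apply,
      sub_eq_zero, div_eq_iff (harea _).ne', mul_comm]
  have hker := LinearMap.ker_eq_range_of_leftInverse hDR hLK
  refine ⟨hker, ?_⟩
  rw [hker, LinearMap.finrank_range_of_inj hDR.injective, Module.finrank_fin_fun]

/-- Lemma 3.4 of the paper: with `D_K V = (1/|K|) Σ_σ V_σ n_σ` and
`(L_K V)_σ = V_σ/|σ| - D_K V·(x̄_σ - x_K)`, the kernel of `L_K` equals the image of
the matrix `R` with rows `(|σ|(x̄_σ - x_K)^T)_σ`, and `dim ker(L_K) = d`. -/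
theorem stmt10 (d k : ℕ) (area : Fin k → ℝ) (harea : ∀ σ, 0 < area σ)
    (n xbar : Fin k → (Fin d → ℝ)) (xK : Fin d → ℝ) (volK : ℝ) (hvol : 0 < volK)
    (hspan : Submodule.span ℝ (Set.range n) = ⊤)
    (hmagic : ∀ e : Fin d → ℝ,
      volK • e = ∑ σ, (area σ * (e ⬝ᵥ n σ)) • (xbar σ - xK))
    (DK : (Fin k → ℝ) →ₗ[ℝ] (Fin d → ℝ))
    (hD : ∀ V, DK V = volK⁻¹ • ∑ σ, V σ • n σ)
    (LK : (Fin k → ℝ) →ₗ[ℝ] (Fin k → ℝ))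
    (hL : ∀ V σ, LK V σ = V σ / area σ - DK V ⬝ᵥ (xbar σ - xK))
    (R : Matrix (Fin k) (Fin d) ℝ)
    (hR : ∀ σ j, R σ j = area σ * (xbar σ j - xK j)) :
    LinearMap.ker LK = LinearMap.range R.mulVecLin ∧
      Module.finrank ℝ (LinearMap.ker LK) = d :=
  stmt10_general d k area harea n xbar xK volK hvol hmagic DK hD LK hL R hR
end

section
/- Let N and R be k×d real matrices with R of rank d and R^T N = |E| Λ for |E| > 0 and Λ symmetric positive definite d×d; let C be a k×(k−d) matrix whose columns form a basis of (Im N)^⊥. A symmetric positive definite k×k matrix M satisfies M N = R if and only if M = (1/|E|) R Λ^{-1} R^T + C U C^T for some symmetric positive definite (k−d)×(k−d) matrix U. -/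
/-!
If `M N = R`, then `Nᵀ M N = e Λ`, so `D := M - e⁻¹ R Λ⁻¹ Rᵀ = M - M N (Nᵀ M N)⁻¹ Nᵀ M`.
With the `M`-orthogonal projection `S = N (Nᵀ M N)⁻¹ Nᵀ M` onto `Im N` this is
`D = (1 - S)ᵀ M (1 - S)`. Since `Nᵀ D = 0`, the columns of the symmetric matrix `D` lie in
`ker Nᵀ = Im C`, hence `D = C U Cᵀ` with `U = Bᵀ D B`, `B = C (Cᵀ C)⁻¹`. Then
`U = ((1 - S) B)ᵀ M ((1 - S) B)` is positive definite because `Cᵀ` is a left inverse of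
`(1 - S) B`: `S` maps into `Im N = ker Cᵀ`. The converse is the computation `Cᵀ N = 0`,
`R Λ⁻¹ Rᵀ N = e R`.
-/

open Matrix

namespace Matrix

variable {m n l : Type*} [Fintype m] [Fintype n] [Fintype l]

lemma mul_eq_zero_of_range_le_ker {R o : Type*} [CommRing R] {A : Matrix o m R} {N : Matrix m n R}
    (h : LinearMap.range N.mulVecLin ≤ LinearMap.ker A.mulVecLin) : A * N = 0 := by
  have hAN := LinearMap.range_le_ker_iff.mp h
  rw [← mulVecLin_mul] at hAN
  exact mulVec_injective (funext fun v => by simpa using LinearMap.congr_fun hAN v)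

lemma range_mulVecLin_eq_ker_transpose {K : Type*} [Field K] {C : Matrix m l K}
    {N : Matrix m n K} (h : LinearMap.ker Cᵀ.mulVecLin = LinearMap.range N.mulVecLin) :
    LinearMap.range C.mulVecLin = LinearMap.ker Nᵀ.mulVecLin := by
  have hNC : Nᵀ * C = 0 := by
    simpa using congrArg transpose (mul_eq_zero_of_range_le_ker h.ge)
  refine Submodule.eq_of_le_of_finrank_eq
    (LinearMap.range_le_ker_iff.mpr (by rw [← mulVecLin_mul, hNC, mulVecLin_zero])) ?_
  have hC := LinearMap.finrank_range_add_finrank_ker Cᵀ.mulVecLin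
  have hN := LinearMap.finrank_range_add_finrank_ker Nᵀ.mulVecLin
  rw [h] at hC
  have := C.rank_transpose
  have := N.rank_transpose
  unfold rank at *
  omega

lemma mul_inv_transpose_mul_mul_of_range_le {R : Type*} [CommRing R] [DecidableEq l]
    {C : Matrix m l R} (hC : IsUnit (Cᵀ * C).det) {D : Matrix m n R}
    (hD : LinearMap.range D.mulVecLin ≤ LinearMap.range C.mulVecLin) :
    C * (Cᵀ * C)⁻¹ * Cᵀ * D = D := by
  apply mulVec_injective
  funext v
  obtain ⟨w, hw⟩ := hD ⟨v, rfl⟩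
  simp only [coe_mulVecLin] at hw
  rw [← mulVec_mulVec, ← hw, mulVec_mulVec, Matrix.mul_assoc (C * _), Matrix.mul_assoc,
    nonsing_inv_mul _ hC, Matrix.mul_one]

lemma IsSymm.eq_mul_mul_transpose_of_range_le {R : Type*} [CommRing R] [DecidableEq l]
    {C : Matrix m l R} (hC : IsUnit (Cᵀ * C).det) {D : Matrix m m R} (hDsymm : D.IsSymm)
    (hD : LinearMap.range D.mulVecLin ≤ LinearMap.range C.mulVecLin) :
    D = C * ((C * (Cᵀ * C)⁻¹)ᵀ * D * (C * (Cᵀ * C)⁻¹)) * Cᵀ := by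
  have hGinv : (Cᵀ * C)⁻¹ᵀ = (Cᵀ * C)⁻¹ := by
    rw [transpose_nonsing_inv, transpose_mul, transpose_transpose]
  have hPD := mul_inv_transpose_mul_mul_of_range_le hC hD
  have hDP : D * (C * (Cᵀ * C)⁻¹ * Cᵀ) = D := by
    have h := congrArg Matrix.transpose hPD
    simpa [transpose_mul, hGinv, hDsymm.eq, Matrix.mul_assoc] using h
  calc D = C * (Cᵀ * C)⁻¹ * Cᵀ * D * (C * (Cᵀ * C)⁻¹ * Cᵀ) := by rw [hPD, hDP]
    _ = _ := by simp only [transpose_mul, hGinv, Matrix.mul_assoc]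

lemma IsSymm.transpose_mul_mul_one_sub_eq {R : Type*} [CommRing R] [DecidableEq m]
    [DecidableEq n] {M : Matrix m m R} (hM : M.IsSymm) {N : Matrix m n R}
    (hA : IsUnit (Nᵀ * M * N).det) :
    (1 - N * (Nᵀ * M * N)⁻¹ * Nᵀ * M)ᵀ * M * (1 - N * (Nᵀ * M * N)⁻¹ * Nᵀ * M) =
      M - M * N * (Nᵀ * M * N)⁻¹ * Nᵀ * M := by
  set A := Nᵀ * M * N with hAdef
  set S := N * A⁻¹ * Nᵀ * M
  set X := M * N * A⁻¹ * Nᵀ * M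
  have hAinv : A⁻¹ᵀ = A⁻¹ := by
    rw [transpose_nonsing_inv, hAdef, transpose_mul, transpose_mul, transpose_transpose, hM.eq,
      Matrix.mul_assoc]
  have hMS : M * S = X := by simp only [S, X, Matrix.mul_assoc]
  have hStM : Sᵀ * M = X := by
    simp only [S, X, transpose_mul, transpose_transpose, hM.eq, hAinv, Matrix.mul_assoc]
  have hStMS : Sᵀ * M * S = X := by
    rw [hStM]
    calc X * S = M * N * (A⁻¹ * A) * A⁻¹ * Nᵀ * M := by simp only [X, S, A, Matrix.mul_assoc]
      _ = X := by rw [nonsing_inv_mul _ hA, Matrix.mul_one]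
  calc (1 - S)ᵀ * M * (1 - S) = M - M * S - (Sᵀ * M - Sᵀ * M * S) := by
        rw [transpose_sub, transpose_one]; noncomm_ring
    _ = M - X := by rw [hStMS, hMS, hStM]; abel

theorem PosDef.exists_posDef_eq_add_mul_mul_transpose [DecidableEq m] [DecidableEq n]
    [DecidableEq l] {M : Matrix m m ℝ} (hM : M.PosDef) {N : Matrix m n ℝ}
    (hA : IsUnit (Nᵀ * M * N).det) {C : Matrix m l ℝ} (hC : Function.Injective C.mulVec)
    (hCN : LinearMap.ker Cᵀ.mulVecLin = LinearMap.range N.mulVecLin) :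
    ∃ U : Matrix l l ℝ, U.PosDef ∧ M = M * N * (Nᵀ * M * N)⁻¹ * Nᵀ * M + C * U * Cᵀ := by
  have hMsymm : M.IsSymm := by simpa using hM.isHermitian
  have hG : IsUnit (Cᵀ * C).det := by
    rw [← isUnit_iff_isUnit_det]
    simpa using (PosDef.conjTranspose_mul_self C hC).isUnit
  set S := N * (Nᵀ * M * N)⁻¹ * Nᵀ * M
  set D := M - M * N * (Nᵀ * M * N)⁻¹ * Nᵀ * M
  set B := C * (Cᵀ * C)⁻¹
  have hD : (1 - S)ᵀ * M * (1 - S) = D := hMsymm.transpose_mul_mul_one_sub_eq hA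
  have hDsymm : D.IsSymm := by
    rw [IsSymm, ← hD, transpose_mul, transpose_mul, transpose_transpose, hMsymm.eq,
      Matrix.mul_assoc]
  have hNtD : Nᵀ * D = 0 := by
    simp only [D, Matrix.mul_sub, ← Matrix.mul_assoc, mul_nonsing_inv _ hA, Matrix.one_mul,
      sub_self]
  have hDC : LinearMap.range D.mulVecLin ≤ LinearMap.range C.mulVecLin := by
    rw [range_mulVecLin_eq_ker_transpose hCN, LinearMap.range_le_ker_iff, ← mulVecLin_mul, hNtD,
      mulVecLin_zero]
  have hCtN : Cᵀ * N = 0 := mul_eq_zero_of_range_le_ker hCN.ge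
  have hleft : Cᵀ * ((1 - S) * B) = 1 := by
    simp only [S, B, Matrix.mul_sub, Matrix.sub_mul, Matrix.mul_one, ← Matrix.mul_assoc, hCtN,
      Matrix.zero_mul, sub_zero, mul_nonsing_inv _ hG]
  have hinj : Function.Injective ((1 - S) * B).mulVec := fun x y hxy => by
    simpa [mulVec_mulVec, hleft] using congrArg (Cᵀ *ᵥ ·) hxy
  refine ⟨Bᵀ * D * B, ?_, ?_⟩
  · rw [← hD]
    simpa [transpose_mul, Matrix.mul_assoc] using hM.conjTranspose_mul_mul_same hinj
  · rw [← hDsymm.eq_mul_mul_transpose_of_range_le hG hDC]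
    exact (add_sub_cancel _ _).symm

end Matrix

theorem stmt14_general (k d : ℕ)
    (N R : Matrix (Fin k) (Fin d) ℝ)
    (Λ : Matrix (Fin d) (Fin d) ℝ) (hΛ : Λ.PosDef)
    (e : ℝ) (he : 0 < e) (hRN : Rᵀ * N = e • Λ)
    (C : Matrix (Fin k) (Fin (k - d)) ℝ)
    (hC : Function.Injective C.mulVecLin)
    (hCN : LinearMap.ker (Cᵀ).mulVecLin = LinearMap.range N.mulVecLin)
    (M : Matrix (Fin k) (Fin k) ℝ) (hM : M.PosDef) :
    M * N = R ↔ ∃ U : Matrix (Fin (k - d)) (Fin (k - d)) ℝ,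
      U.PosDef ∧ M = e⁻¹ • (R * Λ⁻¹ * Rᵀ) + C * U * Cᵀ := by
  have hΛdet : IsUnit Λ.det := (isUnit_iff_isUnit_det _).mp hΛ.isUnit
  have hMsymm : M.IsSymm := by simpa using hM.isHermitian
  constructor
  · rintro rfl
    have hA : Nᵀ * M * N = e • Λ := by rw [← hRN, transpose_mul, hMsymm.eq]
    have hAinv : (Nᵀ * M * N)⁻¹ = e⁻¹ • Λ⁻¹ := by
      rw [hA]
      exact inv_eq_left_inv (by rw [smul_mul_smul_comm, inv_mul_cancel₀ he.ne',
        nonsing_inv_mul _ hΛdet, one_smul])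
    obtain ⟨U, hU, hMU⟩ := hM.exists_posDef_eq_add_mul_mul_transpose
      (hA ▸ (isUnit_iff_isUnit_det _).mp (hΛ.smul he).isUnit) hC hCN
    refine ⟨U, hU, ?_⟩
    rw [hAinv] at hMU
    simpa [transpose_mul, hMsymm.eq, Matrix.mul_assoc] using hMU
  · rintro ⟨U, -, rfl⟩
    rw [Matrix.add_mul, Matrix.smul_mul, Matrix.mul_assoc _ Rᵀ N, hRN, Matrix.mul_assoc (C * U),
      mul_eq_zero_of_range_le_ker hCN.ge, Matrix.mul_zero, add_zero, Matrix.mul_smul,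
      Matrix.mul_assoc, nonsing_inv_mul _ hΛdet, Matrix.mul_one, inv_smul_smul₀ he.ne']

/-- Characterization of the mimetic local matrices: a symmetric positive definite
`k×k` matrix `M` satisfies `M N = R` if and only if
`M = (1/|E|) R Λ⁻¹ R^T + C U C^T` for some symmetric positive definite `U`,
where `R` has rank `d`, `R^T N = |E| Λ` with `Λ` symmetric positive definite, and
`C` is injective with `ker(C^T) = Im(N)`. -/
theorem stmt14 (k d : ℕ) (hdk : d < k)
    (N R : Matrix (Fin k) (Fin d) ℝ) (hR : R.rank = d)
    (Λ : Matrix (Fin d) (Fin d) ℝ) (hΛ : Λ.PosDef)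
    (e : ℝ) (he : 0 < e) (hRN : Rᵀ * N = e • Λ)
    (C : Matrix (Fin k) (Fin (k - d)) ℝ)
    (hC : Function.Injective C.mulVecLin)
    (hCN : LinearMap.ker (Cᵀ).mulVecLin = LinearMap.range N.mulVecLin)
    (M : Matrix (Fin k) (Fin k) ℝ) (hM : M.PosDef) :
    M * N = R ↔ ∃ U : Matrix (Fin (k - d)) (Fin (k - d)) ℝ,
      U.PosDef ∧ M = e⁻¹ • (R * Λ⁻¹ * Rᵀ) + C * U * Cᵀ :=
  stmt14_general k d N R Λ hΛ e he hRN C hC hCN M hM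
end

section
/- In the forward direction of the previous factorization: if M = (1/|E|) R Λ^{-1} R^T + C U C^T with U symmetric positive definite and C injective with Im(C) = (Im N)^⊥, and R^T N = |E|Λ with Λ symmetric positive definite, then M is symmetric positive definite. -/
open Matrix

/-!
Both summands are Gram-type matrices `B A Bᴴ` with `A` positive definite, hence positive
semidefinite, and `x ↦ xᴴ (B A Bᴴ) x` vanishes exactly on `ker Bᴴ`. So the sum is positive definite
as soon as `ker Rᵀ ∩ ker Cᵀ = 0`, and this holds because a vector of `ker Cᵀ = Im N` has the form
`N y`, and `Rᵀ N y = e Λ y` vanishes only for `y = 0`.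
-/

namespace Matrix

theorem ker_mulVecLin_inf_eq_bot_of_injective_mul {m n l p R : Type*} [Fintype n] [Fintype p]
    [CommSemiring R] {A : Matrix m n R} {B : Matrix l n R} {N : Matrix n p R} (hAN : Function.Injective (A * N).mulVec)
    (hBN : LinearMap.ker B.mulVecLin ≤ LinearMap.range N.mulVecLin) :
    LinearMap.ker A.mulVecLin ⊓ LinearMap.ker B.mulVecLin = ⊥ := by
  refine eq_bot_iff.2 fun x ⟨hAx, hBx⟩ => ?_
  obtain ⟨y, rfl⟩ := hBN hBx
  have hy : (A * N) *ᵥ y = (A * N) *ᵥ 0 := by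
    simpa [← mulVec_mulVec] using hAx
  simp [hAN hy]

variable {n m l R : Type*} [Fintype n] [Fintype m] [Fintype l] [CommRing R] [StarRing R]

theorem star_dotProduct_mul_mul_conjTranspose_mulVec (B : Matrix n m R) (A : Matrix m m R)
    (x : n → R) :
    star x ⬝ᵥ (B * A * Bᴴ) *ᵥ x = star (Bᴴ *ᵥ x) ⬝ᵥ A *ᵥ (Bᴴ *ᵥ x) := by
  rw [← mulVec_mulVec, ← mulVec_mulVec, dotProduct_mulVec, star_mulVec,
    conjTranspose_conjTranspose]

theorem PosDef.mul_mul_conjTranspose_add [PartialOrder R] [IsOrderedAddMonoid R]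
    {A : Matrix m m R} {D : Matrix l l R} (hA : A.PosDef) (hD : D.PosDef)
    {B : Matrix n m R} {C : Matrix n l R}
    (hBC : LinearMap.ker Bᴴ.mulVecLin ⊓ LinearMap.ker Cᴴ.mulVecLin = ⊥) :
    (B * A * Bᴴ + C * D * Cᴴ).PosDef := by
  refine .of_dotProduct_mulVec_pos
    ((isHermitian_mul_mul_conjTranspose B hA.1).add (isHermitian_mul_mul_conjTranspose C hD.1))
    fun x hx => ?_
  rw [add_mulVec, dotProduct_add, star_dotProduct_mul_mul_conjTranspose_mulVec,
    star_dotProduct_mul_mul_conjTranspose_mulVec]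
  by_cases hBx : Bᴴ *ᵥ x = 0
  · have hCx : Cᴴ *ᵥ x ≠ 0 := fun hCx => hx <| (Submodule.mem_bot R).1 <| hBC ▸ ⟨hBx, hCx⟩
    exact add_pos_of_nonneg_of_pos (hA.posSemidef.dotProduct_mulVec_nonneg _)
      (hD.dotProduct_mulVec_pos hCx)
  · exact add_pos_of_pos_of_nonneg (hA.dotProduct_mulVec_pos hBx)
      (hD.posSemidef.dotProduct_mulVec_nonneg _)

end Matrix

theorem stmt15_general (k d : ℕ)
    (N R : Matrix (Fin k) (Fin d) ℝ)
    (Λ : Matrix (Fin d) (Fin d) ℝ) (hΛ : Λ.PosDef)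
    (e : ℝ) (he : 0 < e) (hRN : Rᵀ * N = e • Λ)
    (C : Matrix (Fin k) (Fin (k - d)) ℝ)
    (hCN : LinearMap.ker (Cᵀ).mulVecLin = LinearMap.range N.mulVecLin)
    (U : Matrix (Fin (k - d)) (Fin (k - d)) ℝ) (hU : U.PosDef) :
    (e⁻¹ • (R * Λ⁻¹ * Rᵀ) + C * U * Cᵀ).PosDef := by
  have hRN_inj : Function.Injective (Rᵀ * N).mulVec := by
    rw [hRN, mulVec_injective_iff_isUnit]
    exact (hΛ.smul he).isUnit
  have hker := ker_mulVecLin_inf_eq_bot_of_injective_mul hRN_inj hCN.le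
  simp only [← conjTranspose_eq_transpose_of_trivial] at hker ⊢
  rw [← Matrix.smul_mul, ← Matrix.mul_smul]
  exact (hΛ.inv.smul (inv_pos.2 he)).mul_mul_conjTranspose_add hU hker

/-- Forward direction of the factorization: if `M = (1/|E|) R Λ⁻¹ R^T + C U C^T`
with `U` symmetric positive definite, `C` injective with `ker(C^T) = Im(N)`,
`R` of rank `d` and `R^T N = |E| Λ` with `Λ` symmetric positive definite, then `M`
is symmetric positive definite. -/
theorem stmt15 (k d : ℕ) (hdk : d < k)
    (N R : Matrix (Fin k) (Fin d) ℝ) (hR : R.rank = d)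
    (Λ : Matrix (Fin d) (Fin d) ℝ) (hΛ : Λ.PosDef)
    (e : ℝ) (he : 0 < e) (hRN : Rᵀ * N = e • Λ)
    (C : Matrix (Fin k) (Fin (k - d)) ℝ)
    (hC : Function.Injective C.mulVecLin)
    (hCN : LinearMap.ker (Cᵀ).mulVecLin = LinearMap.range N.mulVecLin)
    (U : Matrix (Fin (k - d)) (Fin (k - d)) ℝ) (hU : U.PosDef) :
    (e⁻¹ • (R * Λ⁻¹ * Rᵀ) + C * U * Cᵀ).PosDef :=
  stmt15_general k d N R Λ hΛ e he hRN C hCN U hU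
end

section
/- Two-point flux reduction: suppose for each face σ of a cell K the super-admissibility condition n_{K,σ} = (x̄_σ − x_K)/d_{K,σ} holds with d_{K,σ} > 0, and let λ_K > 0. Then for all families (p_K, (p_σ)_σ) and (q_K, (q_σ)_σ), Σ_σ (|σ| λ_K / d_{K,σ}) S_{K,σ}(p) S_{K,σ}(q) = Σ_σ (|σ| λ_K / d_{K,σ}) (p_K − p_σ)(q_K − q_σ) − |K| λ_K ∇_K p · ∇_K q, where ∇_K p = (1/|K|) Σ_σ |σ|(p_σ − p_K) n_{K,σ} and S_{K,σ}(p) = p_σ − p_K − ∇_K p · (x̄_σ − x_K). -/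
open Matrix BigOperators

private lemma dot_sum_smul {k d : ℕ} (f : Fin k → ℝ) (n : Fin k → Fin d → ℝ)
    (v : Fin d → ℝ) : v ⬝ᵥ (∑ σ, f σ • n σ) = ∑ σ, f σ * (v ⬝ᵥ n σ) := by
  simp only [dotProduct, Finset.sum_apply, Pi.smul_apply, smul_eq_mul, Finset.mul_sum]
  rw [Finset.sum_comm]
  exact Finset.sum_congr rfl fun σ _ => Finset.sum_congr rfl fun i _ => by ring

/-- Two-point flux reduction identity: under the super-admissibility condition
`x̄_σ - x_K = d_{K,σ} n_σ`,
`Σ_σ (|σ|λ_K/d_{K,σ}) S_{K,σ}(p) S_{K,σ}(q)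
  = Σ_σ (|σ|λ_K/d_{K,σ}) (p_K - p_σ)(q_K - q_σ) - |K| λ_K ∇_K p · ∇_K q`. -/
theorem stmt17 (d k : ℕ) (area dK : Fin k → ℝ)
    (harea : ∀ σ, 0 < area σ) (hdK : ∀ σ, 0 < dK σ)
    (n xbar : Fin k → (Fin d → ℝ)) (xK : Fin d → ℝ)
    (volK lamK : ℝ) (hvol : 0 < volK) (hlam : 0 < lamK)
    (hsup : ∀ σ, xbar σ - xK = dK σ • n σ)
    (hmagic : ∀ e : Fin d → ℝ,
      volK • e = ∑ σ, (area σ * (e ⬝ᵥ (xbar σ - xK))) • n σ)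
    (pK qK : ℝ) (p q : Fin k → ℝ) (gp gq : Fin d → ℝ)
    (hgp : gp = volK⁻¹ • ∑ σ, (area σ * (p σ - pK)) • n σ)
    (hgq : gq = volK⁻¹ • ∑ σ, (area σ * (q σ - qK)) • n σ)
    (Sp Sq : Fin k → ℝ)
    (hSp : ∀ σ, Sp σ = p σ - pK - gp ⬝ᵥ (xbar σ - xK))
    (hSq : ∀ σ, Sq σ = q σ - qK - gq ⬝ᵥ (xbar σ - xK)) :
    ∑ σ, (area σ * lamK / dK σ) * (Sp σ * Sq σ)
      = ∑ σ, (area σ * lamK / dK σ) * ((pK - p σ) * (qK - q σ))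
        - volK * lamK * (gp ⬝ᵥ gq) := by
  have hdp : ∀ σ, gp ⬝ᵥ (xbar σ - xK) = dK σ * (gp ⬝ᵥ n σ) := by
    intro σ; rw [hsup σ, dotProduct_smul]; rfl
  have hdq : ∀ σ, gq ⬝ᵥ (xbar σ - xK) = dK σ * (gq ⬝ᵥ n σ) := by
    intro σ; rw [hsup σ, dotProduct_smul]; rfl
  have hvolgp : volK • gp = ∑ σ, (area σ * (p σ - pK)) • n σ := by
    rw [hgp, smul_smul, mul_inv_cancel₀ hvol.ne', one_smul]
  have hvolgq : volK • gq = ∑ σ, (area σ * (q σ - qK)) • n σ := by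
    rw [hgq, smul_smul, mul_inv_cancel₀ hvol.ne', one_smul]
  have hA : ∑ σ, area σ * (p σ - pK) * (gq ⬝ᵥ n σ) = volK * (gp ⬝ᵥ gq) := by
    have h := congrArg (fun v => gq ⬝ᵥ v) hvolgp
    simp only [dot_sum_smul, dotProduct_smul, smul_eq_mul] at h
    rw [← h, dotProduct_comm]
  have hB : ∑ σ, area σ * (q σ - qK) * (gp ⬝ᵥ n σ) = volK * (gp ⬝ᵥ gq) := by
    have h := congrArg (fun v => gp ⬝ᵥ v) hvolgq
    simp only [dot_sum_smul, dotProduct_smul, smul_eq_mul] at h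
    rw [← h]
  have hC : ∑ σ, area σ * dK σ * (gp ⬝ᵥ n σ) * (gq ⬝ᵥ n σ) = volK * (gp ⬝ᵥ gq) := by
    have h := congrArg (fun v => gq ⬝ᵥ v) (hmagic gp)
    simp only [dot_sum_smul, dotProduct_smul, smul_eq_mul] at h
    rw [dotProduct_comm gp, h]
    exact Finset.sum_congr rfl fun σ _ => by rw [hdp σ]; ring
  have hsummand : ∀ σ, (area σ * lamK / dK σ) * (Sp σ * Sq σ)
      = (area σ * lamK / dK σ) * ((pK - p σ) * (qK - q σ))
        - lamK * (area σ * (p σ - pK) * (gq ⬝ᵥ n σ))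
        - lamK * (area σ * (q σ - qK) * (gp ⬝ᵥ n σ))
        + lamK * (area σ * dK σ * (gp ⬝ᵥ n σ) * (gq ⬝ᵥ n σ)) := by
    intro σ
    have hd : dK σ ≠ 0 := (hdK σ).ne'
    rw [hSp σ, hSq σ, hdp σ, hdq σ]
    field_simp
    ring
  calc ∑ σ, (area σ * lamK / dK σ) * (Sp σ * Sq σ)
      = ∑ σ, ((area σ * lamK / dK σ) * ((pK - p σ) * (qK - q σ))
        - lamK * (area σ * (p σ - pK) * (gq ⬝ᵥ n σ))
        - lamK * (area σ * (q σ - qK) * (gp ⬝ᵥ n σ))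
        + lamK * (area σ * dK σ * (gp ⬝ᵥ n σ) * (gq ⬝ᵥ n σ))) :=
        Finset.sum_congr rfl fun σ _ => hsummand σ
    _ = ∑ σ, (area σ * lamK / dK σ) * ((pK - p σ) * (qK - q σ))
        - lamK * ∑ σ, area σ * (p σ - pK) * (gq ⬝ᵥ n σ)
        - lamK * ∑ σ, area σ * (q σ - qK) * (gp ⬝ᵥ n σ)
        + lamK * ∑ σ, area σ * dK σ * (gp ⬝ᵥ n σ) * (gq ⬝ᵥ n σ) := by
        simp [Finset.sum_add_distrib, Finset.sum_sub_distrib, Finset.mul_sum]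
    _ = _ := by rw [hA, hB, hC]; ring
end
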